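/- arXiv:2510.15183 — 2 statements merged into one kernel-verified Lean document; each statement's English description precedes it below -/
import Mathlib

section
/- Under the stated hypotheses on G, the function (x,ξ) ↦ ‖ξ‖_{g_x} = (ξᵀG_xξ)^{1/2} is C^∞ on ℝⁿ × (ℝⁿ∖{0}), and for all multi-indices α, β ∈ ℕⁿ there exists C'_{α,β} > 0 (depending only on n, |α|, |β|, λmin, λmax and the constants c_γ with |γ| ≤ |α|) such that |∂_x^α ∂_ξ^β ‖ξ‖_{g_x}| ≤ C'_{α,β} ⟨x⟩^{|α|} ‖ξ‖_{g_x}^{1−|β|} for every x ∈ ℝⁿ and every ξ ≠ 0. -/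
open scoped RealInnerProductSpace ContDiff

/-- Directional derivative of `f` in direction `v`. -/
noncomputable def dirDeriv {P F : Type*} [NormedAddCommGroup P] [NormedSpace ℝ P]
    [NormedAddCommGroup F] [NormedSpace ℝ F] (v : P) (f : P → F) : P → F :=
  fun p => fderiv ℝ f p v

/-- Iterated directional derivatives along a list of directions. -/
noncomputable def iterDeriv {P F : Type*} [NormedAddCommGroup P] [NormedSpace ℝ P]
    [NormedAddCommGroup F] [NormedSpace ℝ F] : List P → (P → F) → P → F
  | [], f => f
  | v :: l, f => dirDeriv v (iterDeriv l f)

/-- The list of coordinate directions prescribed by a multi-index `α ∈ ℕⁿ`. -/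
def mIdxList {n : ℕ} (α : Fin n → ℕ) : List (Fin n) :=
  (List.finRange n).flatMap fun i => List.replicate (α i) i

/-- The order `|α|` of a multi-index. -/
def mOrd {n : ℕ} (α : Fin n → ℕ) : ℕ := ∑ i, α i

/-- The multi-index partial derivative `∂^α f` of a function on `ℝⁿ`. -/
noncomputable def mderiv {n : ℕ} {F : Type*} [NormedAddCommGroup F] [NormedSpace ℝ F]
    (α : Fin n → ℕ) (f : EuclideanSpace ℝ (Fin n) → F) : EuclideanSpace ℝ (Fin n) → F :=
  iterDeriv ((mIdxList α).map fun i => EuclideanSpace.single i (1 : ℝ)) f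

/-- The mixed multi-index partial derivative `∂_x^α ∂_ξ^β f` of a function on `ℝⁿ_x × ℝⁿ_ξ`. -/
noncomputable def mixDeriv {n : ℕ} {F : Type*} [NormedAddCommGroup F] [NormedSpace ℝ F]
    (α β : Fin n → ℕ)
    (f : EuclideanSpace ℝ (Fin n) × EuclideanSpace ℝ (Fin n) → F) :
    EuclideanSpace ℝ (Fin n) × EuclideanSpace ℝ (Fin n) → F :=
  iterDeriv
    (((mIdxList α).map fun i => (EuclideanSpace.single i (1 : ℝ), (0 : EuclideanSpace ℝ (Fin n))))
      ++ ((mIdxList β).map fun i => ((0 : EuclideanSpace ℝ (Fin n)), EuclideanSpace.single i (1 : ℝ)))) f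

/-- The Japanese bracket `⟨x⟩ = (1 + |x|²)^{1/2}`. -/
noncomputable def jb {n : ℕ} (x : EuclideanSpace ℝ (Fin n)) : ℝ := Real.sqrt (1 + ‖x‖ ^ 2)

section Generic
variable {P F : Type*} [NormedAddCommGroup P] [NormedSpace ℝ P]
    [NormedAddCommGroup F] [NormedSpace ℝ F]

lemma iterDeriv_append (L1 L2 : List P) (f : P → F) :
    iterDeriv (L1 ++ L2) f = iterDeriv L1 (iterDeriv L2 f) := by
  induction L1 with
  | nil => rfl
  | cons v l ih => simp [iterDeriv, ih]

lemma contDiff_dirDeriv {f : P → F} (v : P) (hf : ContDiff ℝ ∞ f) :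
    ContDiff ℝ ∞ (dirDeriv v f) := by
  have : dirDeriv v f = (fun A : P →L[ℝ] F => A v) ∘ fderiv ℝ f := rfl
  rw [this]
  exact (ContinuousLinearMap.apply ℝ F v).contDiff.comp (hf.fderiv_right (by simp))

lemma contDiff_iterDeriv {f : P → F} (L : List P) (hf : ContDiff ℝ ∞ f) :
    ContDiff ℝ ∞ (iterDeriv L f) := by
  induction L with
  | nil => exact hf
  | cons v l ih => exact contDiff_dirDeriv v ih

lemma dirDeriv_swap {f : P → F} (hf : ContDiff ℝ ∞ f) (v w : P) :
    dirDeriv v (dirDeriv w f) = dirDeriv w (dirDeriv v f) := by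
  funext p
  have hdf : ∀ y, HasFDerivAt f (fderiv ℝ f y) y := fun y =>
    (hf.differentiable (by simp)).differentiableAt.hasFDerivAt
  have hdf2 : HasFDerivAt (fderiv ℝ f) (fderiv ℝ (fderiv ℝ f) p) p :=
    (((hf.fderiv_right (m := 1) (WithTop.coe_le_coe.mpr le_top)).differentiable (by simp)).differentiableAt).hasFDerivAt
  have key : ∀ u : P, fderiv ℝ (fun q => fderiv ℝ f q u) p
      = (ContinuousLinearMap.apply ℝ F u).comp (fderiv ℝ (fderiv ℝ f) p) := by
    intro u
    exact (((ContinuousLinearMap.apply ℝ F u).hasFDerivAt).comp p hdf2).fderiv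
  have hsymm := second_derivative_symmetric hdf hdf2 v w
  show fderiv ℝ (fun q => fderiv ℝ f q w) p v = fderiv ℝ (fun q => fderiv ℝ f q v) p w
  rw [key w, key v]
  simpa using hsymm

lemma iterDeriv_perm {f : P → F} (hf : ContDiff ℝ ∞ f) {L L' : List P} (hp : L.Perm L') :
    iterDeriv L f = iterDeriv L' f := by
  induction hp with
  | nil => rfl
  | cons x _ ih => show dirDeriv x _ = dirDeriv x _; rw [ih]
  | swap x y l =>
      show dirDeriv y (dirDeriv x (iterDeriv l f)) = dirDeriv x (dirDeriv y (iterDeriv l f))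
      exact dirDeriv_swap (contDiff_iterDeriv l hf) y x
  | trans _ _ ih1 ih2 => rw [ih1, ih2]

lemma dirDeriv_congr {U : Set P} (hU : IsOpen U) {f g : P → F}
    (h : ∀ q ∈ U, f q = g q) {p : P} (hp : p ∈ U) (v : P) :
    dirDeriv v f p = dirDeriv v g p := by
  have hev : f =ᶠ[nhds p] g := Filter.eventually_iff_exists_mem.2 ⟨U, hU.mem_nhds hp, h⟩
  show fderiv ℝ f p v = fderiv ℝ g p v
  rw [hev.fderiv_eq]

lemma iterDeriv_add {f g : P → F} (hf : ContDiff ℝ ∞ f) (hg : ContDiff ℝ ∞ g) (L : List P) :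
    iterDeriv L (fun p => f p + g p) = fun p => iterDeriv L f p + iterDeriv L g p := by
  induction L with
  | nil => rfl
  | cons v l ih =>
      show dirDeriv v _ = _
      rw [ih]
      funext p
      show fderiv ℝ _ p v = _
      rw [fderiv_fun_add ((contDiff_iterDeriv l hf).differentiable (by simp)).differentiableAt
        ((contDiff_iterDeriv l hg).differentiable (by simp)).differentiableAt]
      rfl

lemma iterDeriv_const_smul {f : P → F} (hf : ContDiff ℝ ∞ f) (a : ℝ) (L : List P) :
    iterDeriv L (fun p => a • f p) = fun p => a • iterDeriv L f p := by
  induction L with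
  | nil => rfl
  | cons v l ih =>
      show dirDeriv v _ = _
      rw [ih]
      funext p
      show fderiv ℝ _ p v = _
      rw [fderiv_fun_const_smul ((contDiff_iterDeriv l hf).differentiable (by simp)).differentiableAt]
      rfl

end Generic

section Aniso
variable {n : ℕ}

abbrev Dn (n : ℕ) := Fin n ⊕ Fin n
abbrev PPn (n : ℕ) := EuclideanSpace ℝ (Fin n) × EuclideanSpace ℝ (Fin n)

noncomputable def dv : Dn n → PPn n :=
  Sum.elim (fun i => (EuclideanSpace.single i (1:ℝ), 0)) (fun i => (0, EuclideanSpace.single i (1:ℝ)))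

def Uset (n : ℕ) : Set (PPn n) := {p | p.2 ≠ 0}

lemma isOpen_Uset : IsOpen (Uset n) := isOpen_ne_fun (by fun_prop) (by fun_prop)

def xcnt (L : List (Dn n)) : ℕ := L.countP (·.isLeft)
def rcnt (L : List (Dn n)) : ℕ := L.countP (·.isRight)

lemma jb_pos (x : EuclideanSpace ℝ (Fin n)) : 0 < jb x := by
  apply Real.sqrt_pos.2; positivity

/-- The symbol-type estimate class. -/
def SymCl (w : PPn n → ℝ) (a m : ℤ) (f : PPn n → ℝ) : Prop :=
  ContDiff ℝ ∞ f ∧ ∀ L : List (Dn n), ∃ C > 0, ∀ p ∈ Uset n,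
    |iterDeriv (L.map dv) f p| ≤ C * jb p.1 ^ (a + (xcnt L : ℤ)) * w p ^ (m - (rcnt L : ℤ))

variable {w : PPn n → ℝ}

lemma iterDeriv_map_append_single (L : List (Dn n)) (d : Dn n) (f : PPn n → ℝ) :
    iterDeriv (L.map dv) (dirDeriv (dv d) f) = iterDeriv ((L ++ [d]).map dv) f := by
  rw [List.map_append, iterDeriv_append]; rfl

lemma sym_dirDeriv {a m : ℤ} {f : PPn n → ℝ} (hf : SymCl w a m f) (d : Dn n) :
    SymCl w (a + (if d.isLeft then 1 else 0)) (m - (if d.isRight then 1 else 0))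
      (dirDeriv (dv d) f) := by
  refine ⟨contDiff_dirDeriv _ hf.1, fun L => ?_⟩
  obtain ⟨C, hC, hb⟩ := hf.2 (L ++ [d])
  refine ⟨C, hC, fun p hp => ?_⟩
  rw [iterDeriv_map_append_single]
  have hx : xcnt (L ++ [d]) = xcnt L + (if d.isLeft then 1 else 0) := by
    simp [xcnt, List.countP_append, List.countP_cons]
  have hr : rcnt (L ++ [d]) = rcnt L + (if d.isRight then 1 else 0) := by
    simp [rcnt, List.countP_append, List.countP_cons]
  have := hb p hp
  rw [hx, hr] at this
  convert this using 3 <;> push_cast <;> ring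

lemma sym_add {a m : ℤ} {f g : PPn n → ℝ} (hf : SymCl w a m f) (hg : SymCl w a m g) :
    SymCl w a m (fun p => f p + g p) := by
  refine ⟨hf.1.add hg.1, fun L => ?_⟩
  obtain ⟨C1, hC1, hb1⟩ := hf.2 L
  obtain ⟨C2, hC2, hb2⟩ := hg.2 L
  refine ⟨C1 + C2, by positivity, fun p hp => ?_⟩
  rw [iterDeriv_add hf.1 hg.1]
  calc |iterDeriv (L.map dv) f p + iterDeriv (L.map dv) g p|
      ≤ |iterDeriv (L.map dv) f p| + |iterDeriv (L.map dv) g p| := abs_add_le _ _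
    _ ≤ C1 * jb p.1 ^ (a + (xcnt L : ℤ)) * w p ^ (m - (rcnt L : ℤ))
        + C2 * jb p.1 ^ (a + (xcnt L : ℤ)) * w p ^ (m - (rcnt L : ℤ)) :=
        add_le_add (hb1 p hp) (hb2 p hp)
    _ = (C1 + C2) * jb p.1 ^ (a + (xcnt L : ℤ)) * w p ^ (m - (rcnt L : ℤ)) := by ring

lemma sym_smul (hw : ∀ p ∈ Uset n, 0 < w p) {a m : ℤ} {f : PPn n → ℝ} (hf : SymCl w a m f) (r : ℝ) :
    SymCl w a m (fun p => r • f p) := by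
  refine ⟨hf.1.const_smul r, fun L => ?_⟩
  obtain ⟨C, hC, hb⟩ := hf.2 L
  refine ⟨(|r| + 1) * C, by positivity, fun p hp => ?_⟩
  rw [iterDeriv_const_smul hf.1]
  have := hb p hp
  have h1 : |r • iterDeriv (L.map dv) f p| = |r| * |iterDeriv (L.map dv) f p| := by
    simp [abs_mul]
  rw [h1]
  have hr : |r| * |iterDeriv (L.map dv) f p| ≤ |r| * (C * jb p.1 ^ (a + (xcnt L : ℤ)) * w p ^ (m - (rcnt L : ℤ))) := by
    apply mul_le_mul_of_nonneg_left (hb p hp) (abs_nonneg r)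
  calc |r| * |iterDeriv (L.map dv) f p|
      ≤ |r| * (C * jb p.1 ^ (a + (xcnt L : ℤ)) * w p ^ (m - (rcnt L : ℤ))) := hr
    _ ≤ (|r| + 1) * C * jb p.1 ^ (a + (xcnt L : ℤ)) * w p ^ (m - (rcnt L : ℤ)) := by
        have h2 : (0:ℝ) ≤ jb p.1 ^ (a + (xcnt L : ℤ)) := le_of_lt (zpow_pos (jb_pos _) _)
        have h3 : (0:ℝ) ≤ w p ^ (m - (rcnt L : ℤ)) := le_of_lt (zpow_pos (hw p hp) _)
        nlinarith [mul_nonneg (le_of_lt hC) (mul_nonneg h2 h3)]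

lemma dirDeriv_mul {f g : PPn n → ℝ} (hf : ContDiff ℝ ∞ f) (hg : ContDiff ℝ ∞ g) (v : PPn n) :
    dirDeriv v (fun p => f p * g p)
      = fun p => dirDeriv v f p * g p + f p * dirDeriv v g p := by
  funext p
  show fderiv ℝ _ p v = _
  rw [fderiv_fun_mul ((hf.differentiable (by simp)).differentiableAt)
    ((hg.differentiable (by simp)).differentiableAt)]
  show f p • fderiv ℝ g p v + g p • fderiv ℝ f p v = _
  simp [dirDeriv]; ring

lemma sym_mul_aux (hw : ∀ p ∈ Uset n, 0 < w p) (L : List (Dn n)) :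
    ∀ (a a' m m' : ℤ) (f g : PPn n → ℝ), SymCl w a m f → SymCl w a' m' g →
    ∃ C > 0, ∀ p ∈ Uset n, |iterDeriv (L.map dv) (fun p => f p * g p) p|
      ≤ C * jb p.1 ^ (a + a' + (xcnt L : ℤ)) * w p ^ (m + m' - (rcnt L : ℤ)) := by
  induction L using List.reverseRecOn with
  | nil =>
      intro a a' m m' f g hf hg
      obtain ⟨C1, hC1, hb1⟩ := hf.2 []
      obtain ⟨C2, hC2, hb2⟩ := hg.2 []
      refine ⟨C1 * C2, by positivity, fun p hp => ?_⟩
      have h1 := hb1 p hp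
      have h2 := hb2 p hp
      have hwp := hw p hp
      simp only [List.map_nil, xcnt, rcnt, List.countP_nil, Nat.cast_zero, add_zero,
        sub_zero] at h1 h2 ⊢
      show |f p * g p| ≤ _
      rw [abs_mul]
      calc |f p| * |g p| ≤ (C1 * jb p.1 ^ a * w p ^ m) * (C2 * jb p.1 ^ a' * w p ^ m') := by
            apply mul_le_mul h1 h2 (abs_nonneg _)
            exact mul_nonneg (mul_nonneg (le_of_lt hC1)
              (le_of_lt (zpow_pos (jb_pos _) _))) (le_of_lt (zpow_pos hwp _))
        _ = C1 * C2 * (jb p.1 ^ a * jb p.1 ^ a') * (w p ^ m * w p ^ m') := by ring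
        _ = C1 * C2 * jb p.1 ^ (a + a') * w p ^ (m + m') := by
            rw [← zpow_add₀ (ne_of_gt (jb_pos p.1)), ← zpow_add₀ (ne_of_gt (hw p hp))]
  | append_singleton l d ih =>
      intro a a' m m' f g hf hg
      have hd1 := sym_dirDeriv hf d
      have hd2 := sym_dirDeriv hg d
      obtain ⟨C1, hC1, hb1⟩ := ih (a + (if d.isLeft then 1 else 0)) a'
        (m - (if d.isRight then 1 else 0)) m' _ _ hd1 hg
      obtain ⟨C2, hC2, hb2⟩ := ih a (a' + (if d.isLeft then 1 else 0)) m
        (m' - (if d.isRight then 1 else 0)) f _ hf hd2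
      have hx : (xcnt (l ++ [d]) : ℤ) = (xcnt l : ℤ) + (if d.isLeft then 1 else 0) := by
        by_cases h : d.isLeft <;> simp [xcnt, List.countP_append, List.countP_cons, h]
      have hr : (rcnt (l ++ [d]) : ℤ) = (rcnt l : ℤ) + (if d.isRight then 1 else 0) := by
        by_cases h : d.isRight <;> simp [rcnt, List.countP_append, List.countP_cons, h]
      refine ⟨C1 + C2, by positivity, fun p hp => ?_⟩
      rw [← iterDeriv_map_append_single, dirDeriv_mul hf.1 hg.1,
        iterDeriv_add ((contDiff_dirDeriv _ hf.1).mul hg.1) (hf.1.mul (contDiff_dirDeriv _ hg.1))]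
      have hb1' := hb1 p hp
      have hb2' := hb2 p hp
      rw [show a + (if d.isLeft then 1 else 0) + a' + (xcnt l : ℤ)
            = a + a' + (xcnt (l ++ [d]) : ℤ) from by rw [hx]; ring,
          show m - (if d.isRight then 1 else 0) + m' - (rcnt l : ℤ)
            = m + m' - (rcnt (l ++ [d]) : ℤ) from by rw [hr]; ring] at hb1'
      rw [show a + (a' + (if d.isLeft then 1 else 0)) + (xcnt l : ℤ)
            = a + a' + (xcnt (l ++ [d]) : ℤ) from by rw [hx]; ring,
          show m + (m' - (if d.isRight then 1 else 0)) - (rcnt l : ℤ)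
            = m + m' - (rcnt (l ++ [d]) : ℤ) from by rw [hr]; ring] at hb2'
      have habs := abs_add_le (iterDeriv (l.map dv) (fun p => dirDeriv (dv d) f p * g p) p)
        (iterDeriv (l.map dv) (fun p => f p * dirDeriv (dv d) g p) p)
      calc _ ≤ _ := habs
        _ ≤ (C1 + C2) * jb p.1 ^ (a + a' + (xcnt (l ++ [d]) : ℤ))
              * w p ^ (m + m' - (rcnt (l ++ [d]) : ℤ)) := by linarith

lemma sym_mul (hw : ∀ p ∈ Uset n, 0 < w p) {a a' m m' : ℤ} {f g : PPn n → ℝ}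
    (hf : SymCl w a m f) (hg : SymCl w a' m' g) :
    SymCl w (a + a') (m + m') (fun p => f p * g p) := by
  refine ⟨hf.1.mul hg.1, fun L => ?_⟩
  exact sym_mul_aux hw L a a' m m' f g hf hg

section Qpart
variable {K : EuclideanSpace ℝ (Fin n) → (EuclideanSpace ℝ (Fin n) →L[ℝ] EuclideanSpace ℝ (Fin n))}

lemma contDiff_app (hK : ContDiff ℝ ∞ K) :
    ContDiff ℝ ∞ (fun q : PPn n => K q.1 q.2) :=
  (hK.comp contDiff_fst).clm_apply contDiff_snd

lemma contDiff_QH (hK : ContDiff ℝ ∞ K) :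
    ContDiff ℝ ∞ (fun q : PPn n => ⟪K q.1 q.2, q.2⟫) :=
  ContDiff.inner ℝ (contDiff_app hK) contDiff_snd

lemma hasFDerivAt_app (hK : ContDiff ℝ ∞ K) (p : PPn n) :
    HasFDerivAt (fun q : PPn n => K q.1 q.2)
      ((isBoundedBilinearMap_apply.deriv (K p.1, p.2)).comp
        (((fderiv ℝ K p.1).comp (ContinuousLinearMap.fst ℝ _ _)).prod
          (ContinuousLinearMap.snd ℝ _ _))) p := by
  have h1 : HasFDerivAt (fun q : PPn n => (K q.1, q.2))
      ((((fderiv ℝ K p.1).comp (ContinuousLinearMap.fst ℝ _ _)).prod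
        (ContinuousLinearMap.snd ℝ _ _))) p := by
    refine HasFDerivAt.prodMk ?_ (hasFDerivAt_snd)
    exact ((hK.differentiable (by simp) p.1).hasFDerivAt).comp p hasFDerivAt_fst
  exact (isBoundedBilinearMap_apply.hasFDerivAt (K p.1, p.2)).comp p h1

lemma hasFDerivAt_appc (hK : ContDiff ℝ ∞ K) (e : EuclideanSpace ℝ (Fin n)) (p : PPn n) :
    HasFDerivAt (fun q : PPn n => K q.1 e)
      ((ContinuousLinearMap.apply ℝ _ e).comp
        ((fderiv ℝ K p.1).comp (ContinuousLinearMap.fst ℝ _ _))) p := by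
  have h1 : HasFDerivAt (fun q : PPn n => K q.1)
      ((fderiv ℝ K p.1).comp (ContinuousLinearMap.fst ℝ _ _)) p :=
    ((hK.differentiable (by simp) p.1).hasFDerivAt).comp p hasFDerivAt_fst
  exact ((ContinuousLinearMap.apply ℝ _ e).hasFDerivAt).comp p h1

lemma dirDeriv_QH_left (hK : ContDiff ℝ ∞ K) (i : Fin n) :
    dirDeriv (dv (Sum.inl i)) (fun q : PPn n => ⟪K q.1 q.2, q.2⟫)
      = fun q : PPn n => ⟪fderiv ℝ K q.1 (EuclideanSpace.single i (1:ℝ)) q.2, q.2⟫ := by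
  funext p
  have h := (hasFDerivAt_app hK p).inner ℝ (hasFDerivAt_snd (p := p))
  show fderiv ℝ _ p _ = _
  rw [h.fderiv]
  simp [dv, fderivInnerCLM_apply]

lemma dirDeriv_QH_right (hK : ContDiff ℝ ∞ K) (j : Fin n) :
    dirDeriv (dv (Sum.inr j)) (fun q : PPn n => ⟪K q.1 q.2, q.2⟫)
      = fun q : PPn n => ⟪K q.1 (EuclideanSpace.single j (1:ℝ)), q.2⟫
          + ⟪K q.1 q.2, EuclideanSpace.single j (1:ℝ)⟫ := by
  funext p
  have h := (hasFDerivAt_app hK p).inner ℝ (hasFDerivAt_snd (p := p))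
  show fderiv ℝ _ p _ = _
  rw [h.fderiv]
  simp [dv, fderivInnerCLM_apply, real_inner_comm]
  ring

lemma dirDeriv_R1_right (hK : ContDiff ℝ ∞ K) (e : EuclideanSpace ℝ (Fin n)) (j : Fin n) :
    dirDeriv (dv (Sum.inr j)) (fun q : PPn n => ⟪K q.1 e, q.2⟫ + ⟪K q.1 q.2, e⟫)
      = fun q : PPn n => ⟪K q.1 e, EuclideanSpace.single j (1:ℝ)⟫
          + ⟪K q.1 (EuclideanSpace.single j (1:ℝ)), e⟫ := by
  funext p
  have h1 := (hasFDerivAt_appc hK e p).inner ℝ (hasFDerivAt_snd (p := p))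
  have h2 := (hasFDerivAt_app hK p).inner ℝ (hasFDerivAt_const e p)
  show fderiv ℝ _ p _ = _
  rw [(h1.fun_add h2).fderiv]
  simp [dv, fderivInnerCLM_apply]

lemma dirDeriv_R2_right (hK : ContDiff ℝ ∞ K) (e e' : EuclideanSpace ℝ (Fin n)) (j : Fin n) :
    dirDeriv (dv (Sum.inr j)) (fun q : PPn n => ⟪K q.1 e, e'⟫ + ⟪K q.1 e', e⟫)
      = fun _ => 0 := by
  funext p
  have h1 := (hasFDerivAt_appc hK e p).inner ℝ (hasFDerivAt_const e' p)
  have h2 := (hasFDerivAt_appc hK e' p).inner ℝ (hasFDerivAt_const e p)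
  show fderiv ℝ _ p _ = _
  rw [(h1.fun_add h2).fderiv]
  simp [dv, fderivInnerCLM_apply]

end Qpart

lemma perm_split (L : List (Dn n)) :
    L.Perm (((L.filterMap Sum.getRight?).map Sum.inr)
      ++ ((L.filterMap Sum.getLeft?).map Sum.inl)) := by
  induction L with
  | nil => rfl
  | cons d l ih =>
      cases d with
      | inl a =>
          simp only [List.filterMap_cons]
          simpa using (ih.cons (Sum.inl a)).trans List.perm_middle.symm
      | inr b =>
          simp only [List.filterMap_cons]
          simpa using (ih.cons (Sum.inr b))

lemma xcnt_eq (L : List (Dn n)) : xcnt L = (L.filterMap Sum.getLeft?).length := by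
  induction L with
  | nil => rfl
  | cons d l ih => cases d <;> simp [xcnt, List.countP_cons, List.filterMap_cons] at * <;> omega

lemma rcnt_eq (L : List (Dn n)) : rcnt L = (L.filterMap Sum.getRight?).length := by
  induction L with
  | nil => rfl
  | cons d l ih => cases d <;> simp [rcnt, List.countP_cons, List.filterMap_cons] at * <;> omega

lemma x_block {G : EuclideanSpace ℝ (Fin n) → (EuclideanSpace ℝ (Fin n) →L[ℝ] EuclideanSpace ℝ (Fin n))}
    (hG : ContDiff ℝ ∞ G) (lx : List (Fin n)) :
    iterDeriv ((lx.map Sum.inl).map dv) (fun q : PPn n => ⟪G q.1 q.2, q.2⟫)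
      = fun q : PPn n =>
          ⟪(iterDeriv (lx.map fun i => EuclideanSpace.single i (1:ℝ)) G) q.1 q.2, q.2⟫ := by
  induction lx with
  | nil => rfl
  | cons i l ih =>
      show dirDeriv (dv (Sum.inl i)) _ = _
      rw [ih, dirDeriv_QH_left (contDiff_iterDeriv _ hG)]
      rfl

/-- Normal form of iterated ξ-derivatives of `⟪K x ξ, ξ⟫`. -/
noncomputable def xiShape (K : EuclideanSpace ℝ (Fin n) → (EuclideanSpace ℝ (Fin n) →L[ℝ] EuclideanSpace ℝ (Fin n))) :
    List (Fin n) → (PPn n → ℝ)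
  | [] => fun q => ⟪K q.1 q.2, q.2⟫
  | [j] => fun q => ⟪K q.1 (EuclideanSpace.single j (1:ℝ)), q.2⟫
      + ⟪K q.1 q.2, EuclideanSpace.single j (1:ℝ)⟫
  | [j1, j2] => fun q => ⟪K q.1 (EuclideanSpace.single j2 (1:ℝ)), EuclideanSpace.single j1 (1:ℝ)⟫
      + ⟪K q.1 (EuclideanSpace.single j1 (1:ℝ)), EuclideanSpace.single j2 (1:ℝ)⟫
  | _ => fun _ => 0

lemma xi_block {K : EuclideanSpace ℝ (Fin n) → (EuclideanSpace ℝ (Fin n) →L[ℝ] EuclideanSpace ℝ (Fin n))}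
    (hK : ContDiff ℝ ∞ K) (M : List (Fin n)) :
    iterDeriv ((M.map Sum.inr).map dv) (fun q : PPn n => ⟪K q.1 q.2, q.2⟫) = xiShape K M := by
  induction M with
  | nil => rfl
  | cons j M ih =>
      show dirDeriv (dv (Sum.inr j)) _ = _
      rw [ih]
      match M with
      | [] => exact dirDeriv_QH_right hK j
      | [j2] => exact dirDeriv_R1_right hK _ j
      | [j2, j3] => exact dirDeriv_R2_right hK _ _ j
      | j2 :: j3 :: j4 :: M' =>
          show dirDeriv (dv (Sum.inr j)) (fun _ => (0:ℝ)) = fun _ => 0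
          funext p
          show fderiv ℝ _ p _ = _
          rw [fderiv_const_apply]
          rfl

end Aniso

section Counting
variable {n : ℕ}

lemma count_mIdxList (β : Fin n → ℕ) (i : Fin n) : (mIdxList β).count i = β i := by
  simp only [mIdxList, List.count_flatMap]
  have : (List.map (List.count i ∘ fun j => List.replicate (β j) j) (List.finRange n)).sum
      = ∑ j : Fin n, if j = i then β j else 0 := by
    rw [Fin.sum_univ_def]
    apply congrArg List.sum
    apply List.map_congr_left
    intro a _
    simp [List.count_replicate]
  rw [this]
  simp

lemma length_mIdxList (β : Fin n → ℕ) : (mIdxList β).length = mOrd β := by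
  simp only [mIdxList, List.length_flatMap]
  have : (List.map (List.length ∘ fun j => List.replicate (β j) j) (List.finRange n)).sum
      = ∑ j : Fin n, β j := by
    rw [Fin.sum_univ_def]
    apply congrArg List.sum
    apply List.map_congr_left
    intro a _
    simp
  exact this

lemma perm_mIdxList (l : List (Fin n)) : l.Perm (mIdxList fun i => l.count i) := by
  rw [List.perm_iff_count]
  intro a
  rw [count_mIdxList]

lemma mOrd_count (l : List (Fin n)) : mOrd (fun i => l.count i) = l.length := by
  rw [← length_mIdxList, ← (perm_mIdxList l).length_eq]

end Counting

section Qbound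
variable {n : ℕ}
  {G : EuclideanSpace ℝ (Fin n) → (EuclideanSpace ℝ (Fin n) →L[ℝ] EuclideanSpace ℝ (Fin n))}
  {lmin : ℝ}

lemma Qpos (hlmin : 0 < lmin)
    (hGspec1 : ∀ x ξ : EuclideanSpace ℝ (Fin n), lmin * ‖ξ‖^2 ≤ ⟪G x ξ, ξ⟫) :
    ∀ p ∈ Uset n, 0 < ⟪G p.1 p.2, p.2⟫ := by
  intro p hp
  have h2 : p.2 ≠ 0 := hp
  have : 0 < lmin * ‖p.2‖^2 := by
    have : 0 < ‖p.2‖ := norm_pos_iff.2 h2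
    positivity
  linarith [hGspec1 p.1 p.2]

lemma wpos (hlmin : 0 < lmin)
    (hGspec1 : ∀ x ξ : EuclideanSpace ℝ (Fin n), lmin * ‖ξ‖^2 ≤ ⟪G x ξ, ξ⟫) :
    ∀ p ∈ Uset n, 0 < Real.sqrt ⟪G p.1 p.2, p.2⟫ := fun p hp =>
  Real.sqrt_pos.2 (Qpos hlmin hGspec1 p hp)

lemma xi_le (hlmin : 0 < lmin)
    (hGspec1 : ∀ x ξ : EuclideanSpace ℝ (Fin n), lmin * ‖ξ‖^2 ≤ ⟪G x ξ, ξ⟫) (p : PPn n) :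
    ‖p.2‖ ≤ (Real.sqrt lmin)⁻¹ * Real.sqrt ⟪G p.1 p.2, p.2⟫ := by
  have hsl : 0 < Real.sqrt lmin := Real.sqrt_pos.2 hlmin
  have h1 : Real.sqrt (lmin * ‖p.2‖^2) ≤ Real.sqrt ⟪G p.1 p.2, p.2⟫ :=
    Real.sqrt_le_sqrt (hGspec1 p.1 p.2)
  rw [Real.sqrt_mul (le_of_lt hlmin), Real.sqrt_sq (norm_nonneg _)] at h1
  calc ‖p.2‖ = (Real.sqrt lmin)⁻¹ * (Real.sqrt lmin * ‖p.2‖) := by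
        field_simp
    _ ≤ (Real.sqrt lmin)⁻¹ * Real.sqrt ⟪G p.1 p.2, p.2⟫ :=
        mul_le_mul_of_nonneg_left h1 (inv_nonneg.2 (le_of_lt hsl))

lemma xiShape_bound (hlmin : 0 < lmin)
    (hGspec1 : ∀ x ξ : EuclideanSpace ℝ (Fin n), lmin * ‖ξ‖^2 ≤ ⟪G x ξ, ξ⟫)
    {K : EuclideanSpace ℝ (Fin n) → (EuclideanSpace ℝ (Fin n) →L[ℝ] EuclideanSpace ℝ (Fin n))}
    {B : ℝ} {l : ℕ} (hB : 0 < B) (hKb : ∀ x, ‖K x‖ ≤ B * jb x ^ l)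
    (rl : List (Fin n)) :
    ∃ C > 0, ∀ p ∈ Uset n, |xiShape K rl p|
      ≤ C * jb p.1 ^ (l : ℤ) * Real.sqrt ⟪G p.1 p.2, p.2⟫ ^ ((2:ℤ) - (rl.length : ℤ)) := by
  have hjb : ∀ x : EuclideanSpace ℝ (Fin n), jb x ^ (l : ℤ) = jb x ^ l := fun x =>
    zpow_natCast _ l
  have hKb' : ∀ p : PPn n, ‖K p.1‖ ≤ B * jb p.1 ^ l := fun p => hKb p.1
  have hop : ∀ (p : PPn n) (u : EuclideanSpace ℝ (Fin n)), ‖K p.1 u‖ ≤ ‖K p.1‖ * ‖u‖ :=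
    fun p u => (K p.1).le_opNorm u
  have hsli : (0:ℝ) ≤ (Real.sqrt lmin)⁻¹ := inv_nonneg.2 (Real.sqrt_nonneg _)
  match rl with
  | [] =>
      have hsl : 0 < Real.sqrt lmin := Real.sqrt_pos.2 hlmin
      refine ⟨B * ((Real.sqrt lmin)⁻¹)^2, mul_pos hB (pow_pos (inv_pos.2 hsl) 2), fun p hp => ?_⟩
      have hw := wpos hlmin hGspec1 p hp
      have hjbl : 0 < jb p.1 ^ l := pow_pos (jb_pos _) l
      have hx := xi_le hlmin hGspec1 p
      have h1 : |xiShape K [] p| ≤ ‖K p.1‖ * (‖p.2‖ * ‖p.2‖) := by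
        show |⟪K p.1 p.2, p.2⟫| ≤ _
        calc |⟪K p.1 p.2, p.2⟫| ≤ ‖K p.1 p.2‖ * ‖p.2‖ := abs_real_inner_le_norm _ _
          _ ≤ (‖K p.1‖ * ‖p.2‖) * ‖p.2‖ :=
              mul_le_mul_of_nonneg_right (hop p p.2) (norm_nonneg _)
          _ = ‖K p.1‖ * (‖p.2‖ * ‖p.2‖) := by ring
      have h2 : Real.sqrt ⟪G p.1 p.2, p.2⟫ ^ ((2:ℤ) - ((0:ℕ):ℤ))
          = Real.sqrt ⟪G p.1 p.2, p.2⟫ * Real.sqrt ⟪G p.1 p.2, p.2⟫ := by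
        norm_num
        ring
      simp only [List.length_nil] at *
      rw [hjb, h2]
      calc |xiShape K [] p| ≤ ‖K p.1‖ * (‖p.2‖ * ‖p.2‖) := h1
        _ ≤ (B * jb p.1 ^ l) * (((Real.sqrt lmin)⁻¹ * Real.sqrt ⟪G p.1 p.2, p.2⟫)
              * ((Real.sqrt lmin)⁻¹ * Real.sqrt ⟪G p.1 p.2, p.2⟫)) := by
            apply mul_le_mul (hKb' p) ?_ (mul_nonneg (norm_nonneg _) (norm_nonneg _)) ?_
            · exact mul_le_mul hx hx (norm_nonneg _) (mul_nonneg hsli (le_of_lt hw))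
            · exact mul_nonneg (le_of_lt hB) (le_of_lt hjbl)
        _ = B * ((Real.sqrt lmin)⁻¹)^2 * jb p.1 ^ l
              * (Real.sqrt ⟪G p.1 p.2, p.2⟫ * Real.sqrt ⟪G p.1 p.2, p.2⟫) := by ring
  | [j] =>
      have hsl : 0 < Real.sqrt lmin := Real.sqrt_pos.2 hlmin
      refine ⟨2 * B * (Real.sqrt lmin)⁻¹,
        mul_pos (mul_pos two_pos hB) (inv_pos.2 hsl), fun p hp => ?_⟩
      have hw := wpos hlmin hGspec1 p hp
      have hjbl : 0 < jb p.1 ^ l := pow_pos (jb_pos _) l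
      have hx := xi_le hlmin hGspec1 p
      have hs1 : ‖EuclideanSpace.single j (1:ℝ)‖ = 1 := by
        rw [EuclideanSpace.norm_single]; norm_num
      have h1 : |xiShape K [j] p| ≤ 2 * (‖K p.1‖ * ‖p.2‖) := by
        show |⟪K p.1 (EuclideanSpace.single j (1:ℝ)), p.2⟫
          + ⟪K p.1 p.2, EuclideanSpace.single j (1:ℝ)⟫| ≤ _
        calc _ ≤ |⟪K p.1 (EuclideanSpace.single j (1:ℝ)), p.2⟫|
              + |⟪K p.1 p.2, EuclideanSpace.single j (1:ℝ)⟫| := abs_add_le _ _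
          _ ≤ ‖K p.1 (EuclideanSpace.single j (1:ℝ))‖ * ‖p.2‖
              + ‖K p.1 p.2‖ * ‖EuclideanSpace.single j (1:ℝ)‖ :=
              add_le_add (abs_real_inner_le_norm _ _) (abs_real_inner_le_norm _ _)
          _ ≤ (‖K p.1‖ * ‖EuclideanSpace.single j (1:ℝ)‖) * ‖p.2‖
              + (‖K p.1‖ * ‖p.2‖) * ‖EuclideanSpace.single j (1:ℝ)‖ :=
              add_le_add (mul_le_mul_of_nonneg_right (hop p _) (norm_nonneg _))
                (mul_le_mul_of_nonneg_right (hop p _) (norm_nonneg _))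
          _ = 2 * (‖K p.1‖ * ‖p.2‖) := by rw [hs1]; ring
      have h2 : Real.sqrt ⟪G p.1 p.2, p.2⟫ ^ ((2:ℤ) - (([j] : List (Fin n)).length : ℤ))
          = Real.sqrt ⟪G p.1 p.2, p.2⟫ := by
        norm_num
      rw [hjb, h2]
      calc |xiShape K [j] p| ≤ 2 * (‖K p.1‖ * ‖p.2‖) := h1
        _ ≤ 2 * ((B * jb p.1 ^ l) * ((Real.sqrt lmin)⁻¹ * Real.sqrt ⟪G p.1 p.2, p.2⟫)) := by
            apply mul_le_mul_of_nonneg_left ?_ (by norm_num)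
            exact mul_le_mul (hKb' p) hx (norm_nonneg _)
              (mul_nonneg (le_of_lt hB) (le_of_lt hjbl))
        _ = 2 * B * (Real.sqrt lmin)⁻¹ * jb p.1 ^ l * Real.sqrt ⟪G p.1 p.2, p.2⟫ := by ring
  | [j1, j2] =>
      refine ⟨2 * B, mul_pos two_pos hB, fun p hp => ?_⟩
      have hs1 : ∀ j : Fin n, ‖EuclideanSpace.single j (1:ℝ)‖ = 1 := fun j => by
        rw [EuclideanSpace.norm_single]; norm_num
      have h1 : |xiShape K [j1, j2] p| ≤ 2 * ‖K p.1‖ := by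
        show |⟪K p.1 (EuclideanSpace.single j2 (1:ℝ)), EuclideanSpace.single j1 (1:ℝ)⟫
          + ⟪K p.1 (EuclideanSpace.single j1 (1:ℝ)), EuclideanSpace.single j2 (1:ℝ)⟫| ≤ _
        calc _ ≤ |⟪K p.1 (EuclideanSpace.single j2 (1:ℝ)), EuclideanSpace.single j1 (1:ℝ)⟫|
              + |⟪K p.1 (EuclideanSpace.single j1 (1:ℝ)), EuclideanSpace.single j2 (1:ℝ)⟫| :=
              abs_add_le _ _
          _ ≤ ‖K p.1 (EuclideanSpace.single j2 (1:ℝ))‖ * ‖EuclideanSpace.single j1 (1:ℝ)‖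
              + ‖K p.1 (EuclideanSpace.single j1 (1:ℝ))‖ * ‖EuclideanSpace.single j2 (1:ℝ)‖ :=
              add_le_add (abs_real_inner_le_norm _ _) (abs_real_inner_le_norm _ _)
          _ ≤ (‖K p.1‖ * ‖EuclideanSpace.single j2 (1:ℝ)‖) * ‖EuclideanSpace.single j1 (1:ℝ)‖
              + (‖K p.1‖ * ‖EuclideanSpace.single j1 (1:ℝ)‖) * ‖EuclideanSpace.single j2 (1:ℝ)‖ :=
              add_le_add (mul_le_mul_of_nonneg_right (hop p _) (norm_nonneg _))
                (mul_le_mul_of_nonneg_right (hop p _) (norm_nonneg _))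
          _ = 2 * ‖K p.1‖ := by rw [hs1 j1, hs1 j2]; ring
      have h2 : Real.sqrt ⟪G p.1 p.2, p.2⟫ ^ ((2:ℤ) - (([j1, j2] : List (Fin n)).length : ℤ))
          = 1 := by norm_num
      rw [hjb, h2]
      calc |xiShape K [j1, j2] p| ≤ 2 * ‖K p.1‖ := h1
        _ ≤ 2 * (B * jb p.1 ^ l) := by
            apply mul_le_mul_of_nonneg_left (hKb' p) (by norm_num)
        _ = 2 * B * jb p.1 ^ l * 1 := by ring
  | j1 :: j2 :: j3 :: rest =>
      refine ⟨1, by norm_num, fun p hp => ?_⟩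
      have hw := wpos hlmin hGspec1 p hp
      have h0 : xiShape K (j1 :: j2 :: j3 :: rest) p = 0 := rfl
      rw [h0]
      have : (0:ℝ) < 1 * jb p.1 ^ (l:ℤ)
          * Real.sqrt ⟪G p.1 p.2, p.2⟫ ^ ((2:ℤ) - ((j1 :: j2 :: j3 :: rest).length : ℤ)) := by
        have := zpow_pos (jb_pos p.1) (l:ℤ)
        have := zpow_pos hw ((2:ℤ) - ((j1 :: j2 :: j3 :: rest).length : ℤ))
        nlinarith
      simp only [abs_zero]
      linarith

end Qbound

section QSym
variable {n : ℕ}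
  {G : EuclideanSpace ℝ (Fin n) → (EuclideanSpace ℝ (Fin n) →L[ℝ] EuclideanSpace ℝ (Fin n))}
  {lmin : ℝ} {c : (Fin n → ℕ) → ℝ}

lemma K_bound (hGi : ContDiff ℝ ∞ G)
    (hGd : ∀ (β : Fin n → ℕ) x, ‖mderiv β G x‖ ≤ c β * jb x ^ mOrd β)
    (ll : List (Fin n)) (x : EuclideanSpace ℝ (Fin n)) :
    ‖iterDeriv (ll.map fun i => EuclideanSpace.single i (1:ℝ)) G x‖
      ≤ c (fun i => ll.count i) * jb x ^ ll.length := by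
  have hperm := (perm_mIdxList ll).map (fun i => EuclideanSpace.single i (1:ℝ))
  rw [iterDeriv_perm hGi hperm]
  have := hGd (fun i => ll.count i) x
  rwa [mOrd_count] at this

lemma symQ (hGi : ContDiff ℝ ∞ G) (hlmin : 0 < lmin)
    (hGspec1 : ∀ x ξ : EuclideanSpace ℝ (Fin n), lmin * ‖ξ‖^2 ≤ ⟪G x ξ, ξ⟫)
    (hc : ∀ β, 0 < c β)
    (hGd : ∀ (β : Fin n → ℕ) x, ‖mderiv β G x‖ ≤ c β * jb x ^ mOrd β) :
    SymCl (fun p : PPn n => Real.sqrt ⟪G p.1 p.2, p.2⟫) 0 2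
      (fun p : PPn n => ⟪G p.1 p.2, p.2⟫) := by
  refine ⟨contDiff_QH hGi, fun L => ?_⟩
  have hKsm : ContDiff ℝ ∞ (iterDeriv ((L.filterMap Sum.getLeft?).map
      fun i => EuclideanSpace.single i (1:ℝ)) G) := contDiff_iterDeriv _ hGi
  have hKb := K_bound hGi hGd (L.filterMap Sum.getLeft?)
  have heq : iterDeriv (L.map dv) (fun q : PPn n => ⟪G q.1 q.2, q.2⟫)
      = xiShape (iterDeriv ((L.filterMap Sum.getLeft?).map
          fun i => EuclideanSpace.single i (1:ℝ)) G) (L.filterMap Sum.getRight?) := by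
    rw [iterDeriv_perm (contDiff_QH hGi) ((perm_split L).map dv), List.map_append,
      iterDeriv_append, x_block hGi, xi_block hKsm]
  obtain ⟨C, hC, hbb⟩ := xiShape_bound hlmin hGspec1 (hc _) hKb (L.filterMap Sum.getRight?)
  refine ⟨C, hC, fun p hp => ?_⟩
  rw [heq, show (0 + (xcnt L : ℤ)) = ((L.filterMap Sum.getLeft?).length : ℤ) by
      rw [xcnt_eq]; ring,
    show ((2:ℤ) - (rcnt L : ℤ)) = ((2:ℤ) - ((L.filterMap Sum.getRight?).length : ℤ)) by
      rw [rcnt_eq]]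
  exact hbb p hp

end QSym

section Phi
variable {n : ℕ}
  {G : EuclideanSpace ℝ (Fin n) → (EuclideanSpace ℝ (Fin n) →L[ℝ] EuclideanSpace ℝ (Fin n))}
  {lmin : ℝ} {c : (Fin n → ℕ) → ℝ} {w : PPn n → ℝ}

lemma iterDeriv_cons_const (r : ℝ) (v : PPn n) (l : List (PPn n)) :
    iterDeriv (v :: l) (fun _ : PPn n => r) = fun _ => 0 := by
  induction l generalizing v with
  | nil =>
      funext p
      show (fderiv ℝ (fun _ : PPn n => r) p) v = 0
      rw [fderiv_const_apply]
      rfl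
  | cons u l ih =>
      show dirDeriv v (iterDeriv (u :: l) _) = _
      rw [ih u]
      funext p
      show fderiv ℝ _ p _ = _
      rw [fderiv_const_apply]
      rfl

lemma sym_const (hw : ∀ p ∈ Uset n, 0 < w p) (r : ℝ) :
    SymCl w 0 0 (fun _ : PPn n => r) := by
  refine ⟨contDiff_const, fun L => ?_⟩
  refine ⟨|r| + 1, by positivity, fun p hp => ?_⟩
  have hjp : (0:ℝ) < jb p.1 ^ ((0:ℤ) + (xcnt L : ℤ)) := zpow_pos (jb_pos _) _
  have hwp : (0:ℝ) < w p ^ ((0:ℤ) - (rcnt L : ℤ)) := zpow_pos (hw p hp) _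
  match L with
  | [] =>
      simp only [List.map_nil, xcnt, rcnt, List.countP_nil, Nat.cast_zero, add_zero, sub_zero,
        zpow_zero, mul_one]
      show |r| ≤ |r| + 1
      linarith
  | d :: L' =>
      rw [show (d :: L').map dv = dv d :: L'.map dv from rfl, iterDeriv_cons_const]
      simp only [abs_zero]
      exact le_of_lt (mul_pos (mul_pos (by positivity) hjp) hwp)

/-- The numerator functions in the representation of iterated derivatives of `√Q`. -/
noncomputable def Rlist
    (G : EuclideanSpace ℝ (Fin n) → (EuclideanSpace ℝ (Fin n) →L[ℝ] EuclideanSpace ℝ (Fin n))) :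
    List (Dn n) → (PPn n → ℝ)
  | [] => fun _ => 1
  | d :: L => fun p => dirDeriv (dv d) (Rlist G L) p * ⟪G p.1 p.2, p.2⟫
      + ((1 - 2 * (L.length:ℝ))/2) •
        (Rlist G L p * dirDeriv (dv d) (fun q : PPn n => ⟪G q.1 q.2, q.2⟫) p)

lemma sym_of_eq {a m a' m' : ℤ} {f : PPn n → ℝ} (h : SymCl w a m f) (ha : a = a') (hm : m = m') :
    SymCl w a' m' f := ha ▸ hm ▸ h

lemma sym_Rlist (hGi : ContDiff ℝ ∞ G) (hlmin : 0 < lmin)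
    (hGspec1 : ∀ x ξ : EuclideanSpace ℝ (Fin n), lmin * ‖ξ‖^2 ≤ ⟪G x ξ, ξ⟫)
    (hc : ∀ β, 0 < c β)
    (hGd : ∀ (β : Fin n → ℕ) x, ‖mderiv β G x‖ ≤ c β * jb x ^ mOrd β) (L : List (Dn n)) :
    SymCl (fun p : PPn n => Real.sqrt ⟪G p.1 p.2, p.2⟫) (xcnt L)
      (2 * L.length - rcnt L) (Rlist G L) := by
  have hw : ∀ p ∈ Uset n, 0 < Real.sqrt ⟪G p.1 p.2, p.2⟫ := wpos hlmin hGspec1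
  have hQ := symQ hGi hlmin hGspec1 hc hGd
  induction L with
  | nil =>
      exact sym_of_eq (sym_const hw 1) (by simp [xcnt]) (by simp [rcnt])
  | cons d L ih =>
      have h1 : SymCl _ _ _ (fun p : PPn n => dirDeriv (dv d) (Rlist G L) p
          * ⟪G p.1 p.2, p.2⟫) := sym_mul hw (sym_dirDeriv ih d) hQ
      have h2 : SymCl _ _ _ (fun p : PPn n => Rlist G L p
          * dirDeriv (dv d) (fun q : PPn n => ⟪G q.1 q.2, q.2⟫) p) :=
        sym_mul hw ih (sym_dirDeriv hQ d)
      have h2' := sym_smul hw h2 ((1 - 2 * (L.length:ℝ))/2)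
      have hxc : (xcnt (d :: L) : ℤ) = xcnt L + (if d.isLeft then 1 else 0) := by
        by_cases h : d.isLeft <;> simp [xcnt, List.countP_cons, h] <;> ring
      have hrc : (rcnt (d :: L) : ℤ) = rcnt L + (if d.isRight then 1 else 0) := by
        by_cases h : d.isRight <;> simp [rcnt, List.countP_cons, h] <;> ring
      rw [show Rlist G (d :: L) = (fun p => dirDeriv (dv d) (Rlist G L) p * ⟪G p.1 p.2, p.2⟫
          + ((1 - 2 * (L.length:ℝ))/2) •
            (Rlist G L p * dirDeriv (dv d) (fun q : PPn n => ⟪G q.1 q.2, q.2⟫) p)) from rfl]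
      refine sym_add (sym_of_eq h1 ?_ ?_) (sym_of_eq h2' ?_ ?_)
      · rw [hxc]; ring
      · rw [hrc]; push_cast [List.length_cons]; ring
      · rw [hxc]; ring
      · rw [hrc]; push_cast [List.length_cons]; ring

lemma rep_sqrt (hGi : ContDiff ℝ ∞ G) (hlmin : 0 < lmin)
    (hGspec1 : ∀ x ξ : EuclideanSpace ℝ (Fin n), lmin * ‖ξ‖^2 ≤ ⟪G x ξ, ξ⟫)
    (hc : ∀ β, 0 < c β)
    (hGd : ∀ (β : Fin n → ℕ) x, ‖mderiv β G x‖ ≤ c β * jb x ^ mOrd β) (L : List (Dn n)) :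
    ∀ p ∈ Uset n, iterDeriv (L.map dv) (fun q : PPn n => Real.sqrt ⟪G q.1 q.2, q.2⟫) p
      = Rlist G L p * Real.sqrt ⟪G p.1 p.2, p.2⟫ ^ (1 - 2 * (L.length : ℤ)) := by
  induction L with
  | nil =>
      intro p hp
      show Real.sqrt ⟪G p.1 p.2, p.2⟫ = 1 * Real.sqrt ⟪G p.1 p.2, p.2⟫ ^ (1 - 2*((0:ℕ):ℤ))
      norm_num
  | cons d L ih =>
      intro p hp
      have hQp : 0 < ⟪G p.1 p.2, p.2⟫ := Qpos hlmin hGspec1 p hp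
      have hsp : 0 < Real.sqrt ⟪G p.1 p.2, p.2⟫ := Real.sqrt_pos.2 hQp
      -- replace inner iterated derivative by the representation, near p
      have hcongr := dirDeriv_congr isOpen_Uset ih hp (dv d)
      show dirDeriv (dv d) _ p = _
      rw [hcongr]
      -- now compute the derivative of q ↦ Rlist G L q * √Q(q) ^ k
      set k : ℤ := 1 - 2 * (L.length : ℤ) with hk
      have hQd : HasFDerivAt (fun q : PPn n => ⟪G q.1 q.2, q.2⟫)
          (fderiv ℝ (fun q : PPn n => ⟪G q.1 q.2, q.2⟫) p) p :=
        (((contDiff_QH hGi).differentiable (by simp)) p).hasFDerivAt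
      have hsq : HasFDerivAt (fun q : PPn n => Real.sqrt ⟪G q.1 q.2, q.2⟫)
          ((1 / (2 * Real.sqrt ⟪G p.1 p.2, p.2⟫))
            • fderiv ℝ (fun q : PPn n => ⟪G q.1 q.2, q.2⟫) p) p :=
        (Real.hasDerivAt_sqrt (ne_of_gt hQp)).comp_hasFDerivAt p hQd
      have hzp : HasFDerivAt (fun q : PPn n => Real.sqrt ⟪G q.1 q.2, q.2⟫ ^ k)
          (((k:ℝ) * Real.sqrt ⟪G p.1 p.2, p.2⟫ ^ (k - 1))
            • ((1 / (2 * Real.sqrt ⟪G p.1 p.2, p.2⟫))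
              • fderiv ℝ (fun q : PPn n => ⟪G q.1 q.2, q.2⟫) p)) p :=
        by have := (hasDerivAt_zpow k _ (Or.inl (ne_of_gt hsp))).comp_hasFDerivAt p hsq; exact this
      have hRsm := (sym_Rlist hGi hlmin hGspec1 hc hGd L).1
      have hR : HasFDerivAt (Rlist G L) (fderiv ℝ (Rlist G L) p) p :=
        ((hRsm.differentiable (by simp)) p).hasFDerivAt
      have hprod := hR.fun_mul hzp
      show fderiv ℝ _ p (dv d) = _
      rw [hprod.fderiv]
      simp only [ContinuousLinearMap.add_apply, ContinuousLinearMap.smul_apply, smul_eq_mul]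
      -- abbreviations
      set s := Real.sqrt ⟪G p.1 p.2, p.2⟫ with hs
      set dRv := fderiv ℝ (Rlist G L) p (dv d) with hdRv
      set dQv := fderiv ℝ (fun q : PPn n => ⟪G q.1 q.2, q.2⟫) p (dv d) with hdQv
      have hsne : s ≠ 0 := ne_of_gt hsp
      have e1 : s ^ k = s ^ (k - 2) * s ^ (2:ℤ) := by
        rw [show k = (k-2) + 2 from by ring, zpow_add₀ hsne]
        ring_nf
      have e2 : s ^ (k - 1) = s ^ (k - 2) * s := by
        rw [show k - 1 = (k-2) + 1 from by ring, zpow_add₀ hsne, zpow_one]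
      have e3 : s ^ (2:ℤ) = ⟪G p.1 p.2, p.2⟫ := by
        rw [show (2:ℤ) = ((2:ℕ):ℤ) from rfl, zpow_natCast, Real.sq_sqrt (le_of_lt hQp)]
      have e4 : (1 - 2 * (((d :: L).length : ℕ) : ℤ)) = k - 2 := by
        rw [hk]; push_cast [List.length_cons]; ring
      -- target
      show Rlist G L p * ((k:ℝ) * s ^ (k-1) * (1 / (2 * s) * dQv)) + s ^ k * dRv
          = Rlist G (d :: L) p * s ^ (1 - 2 * (((d :: L).length : ℕ) : ℤ))
      rw [e4, show Rlist G (d :: L) p = dRv * ⟪G p.1 p.2, p.2⟫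
          + ((1 - 2 * (L.length:ℝ))/2) • (Rlist G L p * dQv) from rfl,
        ← e3, e1, e2]
      have hkr : (k:ℝ) = 1 - 2 * (L.length : ℝ) := by rw [hk]; push_cast; ring
      rw [smul_eq_mul, ← hkr]
      field_simp
      ring

/-- **Derivative bounds for the anisotropic norm `‖ξ‖_{g_x} = |T_xξ|`.**
Under the standing hypotheses on `G` (with `T_x = G_x^{1/2}`), the map
`(x,ξ) ↦ ‖ξ‖_{g_x}` is `C^∞` on `ℝⁿ × (ℝⁿ∖{0})`, and for all multi-indices `α, β` there is
`C'_{α,β} > 0` with `|∂_x^α∂_ξ^β ‖ξ‖_{g_x}| ≤ C'_{α,β} ⟨x⟩^{|α|} ‖ξ‖_{g_x}^{1−|β|}`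
for every `x` and every `ξ ≠ 0`. -/
theorem anisotropic_norm_deriv_bounds {n : ℕ} (hn : 1 ≤ n)
    (G T : EuclideanSpace ℝ (Fin n) → (EuclideanSpace ℝ (Fin n) →L[ℝ] EuclideanSpace ℝ (Fin n)))
    (lmin lmax : ℝ) (hlmin : 0 < lmin) (hminmax : lmin ≤ lmax)
    (hGsmooth : ContDiff ℝ (⊤ : ℕ∞) G)
    (hGsymm : ∀ x v w, ⟪G x v, w⟫ = ⟪v, G x w⟫)
    (hGspec : ∀ (x ξ : EuclideanSpace ℝ (Fin n)),
      lmin * ‖ξ‖ ^ 2 ≤ ⟪G x ξ, ξ⟫ ∧ ⟪G x ξ, ξ⟫ ≤ lmax * ‖ξ‖ ^ 2)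
    (c : (Fin n → ℕ) → ℝ) (hc : ∀ β, 0 < c β)
    (hGderiv : ∀ (β : Fin n → ℕ) (x : EuclideanSpace ℝ (Fin n)),
      ‖mderiv β G x‖ ≤ c β * jb x ^ mOrd β)
    (hTsymm : ∀ x v w, ⟪T x v, w⟫ = ⟪v, T x w⟫)
    (hTpos : ∀ (x ξ : EuclideanSpace ℝ (Fin n)), ξ ≠ 0 → 0 < ⟪T x ξ, ξ⟫)
    (hTsq : ∀ x, (T x).comp (T x) = G x)
    (Φ : EuclideanSpace ℝ (Fin n) × EuclideanSpace ℝ (Fin n) → ℝ)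
    (hΦ : ∀ p : EuclideanSpace ℝ (Fin n) × EuclideanSpace ℝ (Fin n), Φ p = ‖T p.1 p.2‖) :
    ContDiffOn ℝ (⊤ : ℕ∞) Φ {p : EuclideanSpace ℝ (Fin n) × EuclideanSpace ℝ (Fin n) | p.2 ≠ 0} ∧
    (∀ α β : Fin n → ℕ, ∃ C > 0,
      ∀ p : EuclideanSpace ℝ (Fin n) × EuclideanSpace ℝ (Fin n), p.2 ≠ 0 →
        |mixDeriv α β Φ p| ≤ C * jb p.1 ^ mOrd α * ‖T p.1 p.2‖ ^ ((1 : ℤ) - (mOrd β : ℤ))) := by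
  classical
  have hGi : ContDiff ℝ ∞ G := hGsmooth.of_le (by simp)
  have hGspec1 : ∀ x ξ : EuclideanSpace ℝ (Fin n), lmin * ‖ξ‖^2 ≤ ⟪G x ξ, ξ⟫ :=
    fun x ξ => (hGspec x ξ).1
  have hQpos := Qpos hlmin hGspec1
  have hTG : ∀ p : PPn n, ‖T p.1 p.2‖ = Real.sqrt ⟪G p.1 p.2, p.2⟫ := by
    intro p
    have h2 : T p.1 (T p.1 p.2) = G p.1 p.2 := by
      rw [← hTsq p.1]; rfl
    have h1 : ⟪T p.1 p.2, T p.1 p.2⟫ = ⟪G p.1 p.2, p.2⟫ := by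
      rw [hTsymm p.1 p.2 (T p.1 p.2), h2, real_inner_comm]
    rw [norm_eq_sqrt_real_inner, h1]
  have hΦeq : Φ = fun p : PPn n => Real.sqrt ⟪G p.1 p.2, p.2⟫ :=
    funext fun p => by rw [hΦ p, hTG p]
  constructor
  · -- smoothness on the open set
    rw [hΦeq]
    intro p hp
    have hQsm : ContDiff ℝ (⊤ : ℕ∞) (fun q : PPn n => ⟪G q.1 q.2, q.2⟫) :=
      ContDiff.inner ℝ ((hGsmooth.comp contDiff_fst).clm_apply contDiff_snd) contDiff_snd
    exact ((Real.contDiffAt_sqrt (ne_of_gt (hQpos p hp))).comp p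
      hQsm.contDiffAt).contDiffWithinAt
  · intro α β
    have hmix : mixDeriv α β Φ
        = iterDeriv (((((mIdxList α).map Sum.inl ++ (mIdxList β).map Sum.inr) : List (Dn n)).map dv))
          (fun q : PPn n => Real.sqrt ⟪G q.1 q.2, q.2⟫) := by
      rw [hΦeq]
      show iterDeriv _ _ = iterDeriv _ _
      congr 1
      simp [dv, List.map_append, List.map_map, Function.comp]
    set L₀ : List (Dn n) := (mIdxList α).map Sum.inl ++ (mIdxList β).map Sum.inr with hL₀
    have hxc : (xcnt L₀ : ℤ) = (mOrd α : ℤ) := by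
      have : xcnt L₀ = (mIdxList α).length := by
        simp [hL₀, xcnt, List.countP_append, List.countP_map, Function.comp_def,
          Sum.isLeft_inl, Sum.isLeft_inr, List.countP_true, List.countP_false]
      rw [this, length_mIdxList]
    have hrc : (rcnt L₀ : ℤ) = (mOrd β : ℤ) := by
      have : rcnt L₀ = (mIdxList β).length := by
        simp [hL₀, rcnt, List.countP_append, List.countP_map, Function.comp_def,
          Sum.isRight_inl, Sum.isRight_inr, List.countP_true, List.countP_false]
      rw [this, length_mIdxList]
    obtain ⟨C, hC, hb⟩ := (sym_Rlist hGi hlmin hGspec1 hc hGderiv L₀).2 []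
    refine ⟨C, hC, fun p hp2 => ?_⟩
    have hp : p ∈ Uset n := hp2
    have hsp : 0 < Real.sqrt ⟪G p.1 p.2, p.2⟫ := wpos hlmin hGspec1 p hp
    have hrep := rep_sqrt hGi hlmin hGspec1 hc hGderiv L₀ p hp
    rw [hmix, hrep, hTG p]
    have hbp := hb p hp
    simp only [List.map_nil, xcnt, rcnt, List.countP_nil, Nat.cast_zero, add_zero,
      sub_zero] at hbp
    have habs : |Rlist G L₀ p * Real.sqrt ⟪G p.1 p.2, p.2⟫ ^ (1 - 2*(L₀.length:ℤ))|
        = |Rlist G L₀ p| * Real.sqrt ⟪G p.1 p.2, p.2⟫ ^ (1 - 2*(L₀.length:ℤ)) := by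
      rw [abs_mul, abs_of_pos (zpow_pos hsp _)]
    rw [habs]
    calc |Rlist G L₀ p| * Real.sqrt ⟪G p.1 p.2, p.2⟫ ^ (1 - 2*(L₀.length:ℤ))
        ≤ (C * jb p.1 ^ ((xcnt L₀ : ℤ))
            * Real.sqrt ⟪G p.1 p.2, p.2⟫ ^ (2 * (L₀.length:ℤ) - (rcnt L₀:ℤ)))
            * Real.sqrt ⟪G p.1 p.2, p.2⟫ ^ (1 - 2*(L₀.length:ℤ)) :=
          mul_le_mul_of_nonneg_right hbp (le_of_lt (zpow_pos hsp _))
      _ = C * jb p.1 ^ ((xcnt L₀ : ℤ))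
            * Real.sqrt ⟪G p.1 p.2, p.2⟫ ^ ((1:ℤ) - (rcnt L₀:ℤ)) := by
          rw [mul_assoc, ← zpow_add₀ (ne_of_gt hsp),
            show (2 * (L₀.length:ℤ) - (rcnt L₀:ℤ)) + (1 - 2*(L₀.length:ℤ))
              = (1:ℤ) - (rcnt L₀:ℤ) from by ring]
      _ = C * jb p.1 ^ mOrd α
            * Real.sqrt ⟪G p.1 p.2, p.2⟫ ^ ((1:ℤ) - (mOrd β : ℤ)) := by
          rw [hxc, hrc, zpow_natCast]
end Phi
end

section
/- (Tail criterion for norm convergence via Cotlar–Stein.) Let H be a Hilbert space and {T_j}_{j∈ℕ} a countable family of bounded linear operators on H with A := sup_j Σ_k ‖T_j* T_k‖^{1/2} < ∞ and B := sup_k Σ_j ‖T_j T_k*‖^{1/2} < ∞. If in addition the tails A_N := sup_j Σ_{k ≥ N} ‖T_j* T_k‖^{1/2} → 0 and B_N := sup_k Σ_{j ≥ N} ‖T_j T_k*‖^{1/2} → 0 as N → ∞, then the series Σ_j T_j converges in the operator norm of B(H), and its sum T satisfies ‖T‖ ≤ √(A·B). -/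
/-!
For a finite sum `S = ∑ⱼ Tⱼ`, the power `(S⋆S)ⁿ` expands into products
`T_{j₁}⋆ T_{k₁} ⋯ T_{jₙ}⋆ T_{kₙ}`. Multiplied on the left by `T_{k₀}`, each product is bounded
both by grouping it as `T_{k₀} (T_{j₁}⋆ T_{k₁}) ⋯ (T_{jₙ}⋆ T_{kₙ})` and as
`(T_{k₀} T_{j₁}⋆) ⋯ (T_{kₙ₋₁} T_{jₙ}⋆) T_{kₙ}`, hence by the geometric mean of the two bounds, and
these geometric means sum link by link to at most `b (ab)ⁿ`. So `‖(S⋆S)ⁿ⁺¹‖ ≤ C (ab)ⁿ` with `C`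
independent of `n`, while the C⋆-identity gives `‖(S⋆S)^(2^m)‖ = (‖S‖²)^(2^m)`; letting `m → ∞`
yields `‖S‖² ≤ ab`. Applied to finite sets of late indices, where `a` may be taken arbitrarily
small by the tail hypothesis, the same estimate shows that the partial sums are Cauchy.
-/

open Filter Topology Finset

lemma le_of_pow_succ_le_mul_pow {x y C : ℝ} (hy : 0 ≤ y) {u : ℕ → ℕ}
    (hu : Tendsto u atTop atTop) (h : ∀ m, x ^ (u m + 1) ≤ C * y ^ u m) : x ≤ y := by
  by_contra! hxy
  have hx : 0 < x := hy.trans_lt hxy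
  have hbound : ∀ m, x ≤ C * (y / x) ^ u m := fun m => by
    rw [div_pow, mul_div_assoc', le_div_iff₀ (pow_pos hx _), ← pow_succ']
    exact h m
  have hlim : Tendsto (fun m => C * (y / x) ^ u m) atTop (𝓝 0) := by
    simpa using ((tendsto_pow_atTop_nhds_zero_of_lt_one (div_nonneg hy hx.le)
      ((div_lt_one hx).2 hxy)).comp hu).const_mul C
  exact hx.not_ge (ge_of_tendsto' hlim hbound)

namespace CotlarStein

variable {ι E : Type*} [NormedRing E] [StarRing E] (T : ι → E)

def chainProd : List (ι × ι) → E
  | [] => 1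
  | p :: w => star (T p.1) * T p.2 * chainProd w

def diagBound : List (ι × ι) → ℝ
  | [] => 1
  | p :: w => ‖star (T p.1) * T p.2‖ * diagBound w

def crossBound : ι → List (ι × ι) → ℝ
  | k, [] => ‖T k‖
  | k, p :: w => ‖T p.1 * star (T k)‖ * crossBound p.2 w

lemma diagBound_nonneg : ∀ w : List (ι × ι), 0 ≤ diagBound T w
  | [] => zero_le_one
  | _ :: w => mul_nonneg (norm_nonneg _) (diagBound_nonneg w)

lemma norm_mul_chainProd_le_diagBound :
    ∀ (w : List (ι × ι)) (x : E), ‖x * chainProd T w‖ ≤ ‖x‖ * diagBound T w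
  | [], x => by simp [chainProd, diagBound]
  | p :: w, x => calc
      ‖x * chainProd T (p :: w)‖ = ‖x * (star (T p.1) * T p.2) * chainProd T w‖ := by
        simp only [chainProd, mul_assoc]
      _ ≤ ‖x * (star (T p.1) * T p.2)‖ * diagBound T w := norm_mul_chainProd_le_diagBound w _
      _ ≤ ‖x‖ * diagBound T (p :: w) := by
        rw [diagBound, ← mul_assoc ‖x‖]
        exact mul_le_mul_of_nonneg_right (norm_mul_le x _) (diagBound_nonneg T w)

def chains (F : Finset ι) : ℕ → Finset (List (ι × ι))
  | 0 => {[]}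
  | n + 1 => ((F ×ˢ F) ×ˢ chains F n).map
      ⟨fun q => q.1 :: q.2, fun _ _ h => Prod.ext_iff.2 (List.cons_eq_cons.1 h)⟩

lemma sum_chains_succ {M : Type*} [AddCommMonoid M] (F : Finset ι) (n : ℕ)
    (f : List (ι × ι) → M) :
    ∑ w ∈ chains F (n + 1), f w = ∑ j ∈ F, ∑ k ∈ F, ∑ w ∈ chains F n, f ((j, k) :: w) := by
  rw [chains, sum_map, sum_product, sum_product]
  rfl

lemma star_sum_mul_sum_pow (F : Finset ι) :
    ∀ n : ℕ, (star (∑ j ∈ F, T j) * ∑ j ∈ F, T j) ^ n = ∑ w ∈ chains F n, chainProd T w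
  | 0 => by simp [chains, chainProd]
  | n + 1 => by
    rw [pow_succ', star_sum_mul_sum_pow F n, star_sum, sum_mul_sum, sum_chains_succ]
    simp only [sum_mul]
    simp only [mul_sum, chainProd]

variable [CStarRing E]

lemma norm_mul_chainProd_le_crossBound :
    ∀ (w : List (ι × ι)) (k : ι), ‖T k * chainProd T w‖ ≤ crossBound T k w
  | [], k => by simp [chainProd, crossBound]
  | p :: w, k => calc
      ‖T k * chainProd T (p :: w)‖ = ‖(T k * star (T p.1)) * (T p.2 * chainProd T w)‖ := by
        simp only [chainProd, mul_assoc]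
      _ ≤ ‖T k * star (T p.1)‖ * ‖T p.2 * chainProd T w‖ := norm_mul_le _ _
      _ ≤ crossBound T k (p :: w) := by
        rw [crossBound, ← norm_star (T k * star (T p.1)), star_mul, star_star]
        gcongr
        exact norm_mul_chainProd_le_crossBound w p.2

lemma norm_mul_chainProd_le_sqrt (w : List (ι × ι)) (k : ι) :
    ‖T k * chainProd T w‖ ≤ √‖T k‖ * √(diagBound T w * crossBound T k w) := by
  rw [← Real.sqrt_mul (norm_nonneg _), ← mul_assoc]
  refine Real.le_sqrt_of_sq_le ?_
  rw [sq]
  exact mul_le_mul (norm_mul_chainProd_le_diagBound T w _)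
    (norm_mul_chainProd_le_crossBound T w k) (norm_nonneg _)
    (mul_nonneg (norm_nonneg _) (diagBound_nonneg T w))


lemma norm_le_of_sum_sqrt_norm_mul_star_le {F : Finset ι} {k : ι} {b : ℝ} (hk : k ∈ F)
    (hb : ∑ j ∈ F, √‖T j * star (T k)‖ ≤ b) : ‖T k‖ ≤ b := calc
  ‖T k‖ = √‖T k * star (T k)‖ := by
    rw [CStarRing.norm_self_mul_star, Real.sqrt_mul_self (norm_nonneg _)]
  _ ≤ ∑ j ∈ F, √‖T j * star (T k)‖ :=
    single_le_sum (f := fun j => √‖T j * star (T k)‖) (fun _ _ => Real.sqrt_nonneg _) hk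
  _ ≤ b := hb

section FiniteSum

variable {F : Finset ι} {a b : ℝ} (ha : ∀ j ∈ F, ∑ k ∈ F, √‖star (T j) * T k‖ ≤ a)
  (hb : ∀ k ∈ F, ∑ j ∈ F, √‖T j * star (T k)‖ ≤ b)
include ha hb

lemma sum_chains_sqrt_le (n : ℕ) :
    ∀ k ∈ F, ∑ w ∈ chains F n, √(diagBound T w * crossBound T k w) ≤ √b * (a * b) ^ n := by
  induction n with
  | zero =>
    intro k hk
    simpa [chains, diagBound, crossBound] using
      Real.sqrt_le_sqrt (norm_le_of_sum_sqrt_norm_mul_star_le T hk (hb k hk))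
  | succ n ih =>
    intro k hk
    have ha0 : 0 ≤ a := (sum_nonneg fun _ _ => Real.sqrt_nonneg _).trans (ha k hk)
    have hb0 : 0 ≤ b := (sum_nonneg fun _ _ => Real.sqrt_nonneg _).trans (hb k hk)
    have hlink : ∀ j k' w, √(diagBound T ((j, k') :: w) * crossBound T k ((j, k') :: w)) =
        √‖T j * star (T k)‖ * (√‖star (T j) * T k'‖ * √(diagBound T w * crossBound T k' w)) := by
      intro j k' w
      simp only [diagBound, crossBound]
      rw [← Real.sqrt_mul (norm_nonneg _), ← Real.sqrt_mul (norm_nonneg _)]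
      ring_nf
    calc ∑ w ∈ chains F (n + 1), √(diagBound T w * crossBound T k w)
        = ∑ j ∈ F, √‖T j * star (T k)‖ * ∑ k' ∈ F, √‖star (T j) * T k'‖ *
            ∑ w ∈ chains F n, √(diagBound T w * crossBound T k' w) := by
          simp only [sum_chains_succ, hlink, mul_sum]
      _ ≤ ∑ j ∈ F, √‖T j * star (T k)‖ * ∑ k' ∈ F, √‖star (T j) * T k'‖ *
            (√b * (a * b) ^ n) := by
          gcongr with j _ k' hk'
          exact ih k' hk'
      _ ≤ ∑ j ∈ F, √‖T j * star (T k)‖ * (a * (√b * (a * b) ^ n)) := by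
          gcongr with j hj
          rw [← sum_mul]
          gcongr
          exact ha j hj
      _ ≤ b * (a * (√b * (a * b) ^ n)) := by
          rw [← sum_mul]
          gcongr
          exact hb k hk
      _ = √b * (a * b) ^ (n + 1) := by ring

lemma norm_star_sum_mul_sum_pow_succ_le (n : ℕ) :
    ‖(star (∑ j ∈ F, T j) * ∑ j ∈ F, T j) ^ (n + 1)‖ ≤
      ‖∑ j ∈ F, T j‖ * (#F * (b * (a * b) ^ n)) := by
  set S := ∑ j ∈ F, T j
  have hterm : ∀ k ∈ F, ∑ w ∈ chains F n, ‖T k * chainProd T w‖ ≤ b * (a * b) ^ n := by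
    intro k hk
    have hb0 : 0 ≤ b := (sum_nonneg fun _ _ => Real.sqrt_nonneg _).trans (hb k hk)
    calc ∑ w ∈ chains F n, ‖T k * chainProd T w‖
        ≤ ∑ w ∈ chains F n, √‖T k‖ * √(diagBound T w * crossBound T k w) :=
          sum_le_sum fun w _ => norm_mul_chainProd_le_sqrt T w k
      _ = √‖T k‖ * ∑ w ∈ chains F n, √(diagBound T w * crossBound T k w) := (mul_sum _ _ _).symm
      _ ≤ √b * (√b * (a * b) ^ n) := by
          gcongr
          · exact norm_le_of_sum_sqrt_norm_mul_star_le T hk (hb k hk)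
          · exact sum_chains_sqrt_le T ha hb n k hk
      _ = b * (a * b) ^ n := by rw [← mul_assoc, Real.mul_self_sqrt hb0]
  calc ‖(star S * S) ^ (n + 1)‖
      = ‖star S * ∑ k ∈ F, ∑ w ∈ chains F n, T k * chainProd T w‖ := by
        rw [pow_succ', mul_assoc, star_sum_mul_sum_pow, sum_mul_sum]
    _ ≤ ‖S‖ * ∑ k ∈ F, ∑ w ∈ chains F n, ‖T k * chainProd T w‖ := by
        refine (norm_mul_le _ _).trans ?_
        rw [norm_star]
        gcongr
        exact (norm_sum_le _ _).trans (sum_le_sum fun k _ => norm_sum_le _ _)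
    _ ≤ ‖S‖ * ∑ _k ∈ F, b * (a * b) ^ n := by gcongr with k hk; exact hterm k hk
    _ = ‖S‖ * (#F * (b * (a * b) ^ n)) := by rw [sum_const, nsmul_eq_mul]

theorem norm_sum_le_sqrt_mul : ‖∑ j ∈ F, T j‖ ≤ √(a * b) := by
  obtain rfl | ⟨k, hk⟩ := F.eq_empty_or_nonempty
  · simp
  have ha0 : 0 ≤ a := (sum_nonneg fun _ _ => Real.sqrt_nonneg _).trans (ha k hk)
  have hb0 : 0 ≤ b := (sum_nonneg fun _ _ => Real.sqrt_nonneg _).trans (hb k hk)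
  set S := ∑ j ∈ F, T j
  have hpow : ∀ m, (‖S‖ ^ 2) ^ (2 ^ m - 1 + 1) ≤ ‖S‖ * #F * b * (a * b) ^ (2 ^ m - 1) := by
    intro m
    have h := norm_star_sum_mul_sum_pow_succ_le T ha hb (2 ^ m - 1)
    rw [Nat.sub_add_cancel Nat.one_le_two_pow, (IsSelfAdjoint.star_mul_self S).norm_pow_two_pow,
      CStarRing.norm_star_mul_self, ← sq] at h
    rw [Nat.sub_add_cancel Nat.one_le_two_pow]
    exact h.trans_eq (by ring)
  refine Real.le_sqrt_of_sq_le (le_of_pow_succ_le_mul_pow (mul_nonneg ha0 hb0) ?_ hpow)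
  exact (tendsto_sub_atTop_nat 1).comp (tendsto_pow_atTop_atTop_of_one_lt one_lt_two)

end FiniteSum

theorem summable [CompleteSpace E] {b : ℝ}
    (hb : ∀ k (F : Finset ι), ∑ j ∈ F, √‖T j * star (T k)‖ ≤ b)
    (htail : ∀ ε > 0, ∃ s : Finset ι, ∀ j (F : Finset ι), Disjoint F s →
      ∑ k ∈ F, √‖star (T j) * T k‖ ≤ ε) :
    Summable T := by
  rw [summable_iff_vanishing_norm]
  intro ε hε
  set δ := ε ^ 2 / (|b| + 1)
  obtain ⟨s, hs⟩ := htail δ (by positivity)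
  refine ⟨s, fun F hF => ?_⟩
  calc ‖∑ j ∈ F, T j‖ ≤ √(δ * b) :=
        norm_sum_le_sqrt_mul T (fun j _ => hs j F hF) (fun k _ => hb k F)
    _ < ε := by
        rw [Real.sqrt_lt' hε]
        calc δ * b ≤ δ * |b| := by gcongr; exact le_abs_self b
          _ < ε ^ 2 := by
            rw [div_mul_eq_mul_div, div_lt_iff₀ (by positivity)]
            exact mul_lt_mul_of_pos_left (lt_add_one _) (by positivity)

end CotlarStein

theorem cotlar_stein_norm_convergence_general {H : Type*} [NormedAddCommGroup H]
    [InnerProductSpace ℂ H] [CompleteSpace H]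
    (T : ℕ → H →L[ℂ] H) (A B : ℝ)
    (hA : ∀ j : ℕ, ∀ F : Finset ℕ,
      ∑ k ∈ F, Real.sqrt ‖(ContinuousLinearMap.adjoint (T j)).comp (T k)‖ ≤ A)
    (hB : ∀ k : ℕ, ∀ F : Finset ℕ,
      ∑ j ∈ F, Real.sqrt ‖(T j).comp (ContinuousLinearMap.adjoint (T k))‖ ≤ B)
    (hAtail : ∀ ε > 0, ∃ N : ℕ, ∀ j : ℕ, ∀ F : Finset ℕ, (∀ k ∈ F, N ≤ k) →
      ∑ k ∈ F, Real.sqrt ‖(ContinuousLinearMap.adjoint (T j)).comp (T k)‖ ≤ ε) :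
    ∃ S : H →L[ℂ] H, HasSum T S ∧ ‖S‖ ≤ Real.sqrt (A * B) := by
  have htail : ∀ ε > 0, ∃ s : Finset ℕ, ∀ j (F : Finset ℕ), Disjoint F s →
      ∑ k ∈ F, √‖star (T j) * T k‖ ≤ ε := by
    intro ε hε
    obtain ⟨N, hN⟩ := hAtail ε hε
    exact ⟨range N, fun j F hF => hN j F fun k hk =>
      not_lt.1 fun hkN => disjoint_left.1 hF hk (mem_range.2 hkN)⟩
  obtain ⟨S, hS⟩ := CotlarStein.summable T hB htail
  have hpartial : ∀ F : Finset ℕ, ‖∑ j ∈ F, T j‖ ≤ √(A * B) := fun F =>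
    CotlarStein.norm_sum_le_sqrt_mul T (fun j _ => hA j F) (fun k _ => hB k F)
  exact ⟨S, hS, le_of_tendsto' (Tendsto.norm hS) hpartial⟩

/-- **Tail criterion for norm convergence via Cotlar–Stein.**
Let `{T_j}_{j∈ℕ}` be bounded operators on a Hilbert space `H` with
`A := sup_j Σ_k ‖T_j* T_k‖^{1/2} < ∞` and `B := sup_k Σ_j ‖T_j T_k*‖^{1/2} < ∞`.  If moreover
the tails `A_N := sup_j Σ_{k≥N} ‖T_j* T_k‖^{1/2}` and `B_N := sup_k Σ_{j≥N} ‖T_j T_k*‖^{1/2}`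
tend to `0` as `N → ∞`, then `Σ_j T_j` converges in operator norm and its sum `T` satisfies
`‖T‖ ≤ √(AB)`. -/
theorem cotlar_stein_norm_convergence {H : Type*} [NormedAddCommGroup H]
    [InnerProductSpace ℂ H] [CompleteSpace H]
    (T : ℕ → H →L[ℂ] H) (A B : ℝ)
    (hA : ∀ j : ℕ, ∀ F : Finset ℕ,
      ∑ k ∈ F, Real.sqrt ‖(ContinuousLinearMap.adjoint (T j)).comp (T k)‖ ≤ A)
    (hB : ∀ k : ℕ, ∀ F : Finset ℕ,
      ∑ j ∈ F, Real.sqrt ‖(T j).comp (ContinuousLinearMap.adjoint (T k))‖ ≤ B)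
    (hAtail : ∀ ε > 0, ∃ N : ℕ, ∀ j : ℕ, ∀ F : Finset ℕ, (∀ k ∈ F, N ≤ k) →
      ∑ k ∈ F, Real.sqrt ‖(ContinuousLinearMap.adjoint (T j)).comp (T k)‖ ≤ ε)
    (hBtail : ∀ ε > 0, ∃ N : ℕ, ∀ k : ℕ, ∀ F : Finset ℕ, (∀ j ∈ F, N ≤ j) →
      ∑ j ∈ F, Real.sqrt ‖(T j).comp (ContinuousLinearMap.adjoint (T k))‖ ≤ ε) :
    ∃ S : H →L[ℂ] H, HasSum T S ∧ ‖S‖ ≤ Real.sqrt (A * B) :=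
  cotlar_stein_norm_convergence_general T A B hA hB hAtail
end
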